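/- arXiv:2604.12963 — 8 statements merged into one kernel-verified Lean document; each statement's English description precedes it below -/
import Mathlib

section
/- Let f : ℝ → ℝ be continuous and nondecreasing, and let I be its set of points of increase. Then no point x ∈ I is simultaneously left-isolated and right-isolated in I; in particular, I has no isolated points. -/
/-!
If a continuous monotone `f` has `f a < f b` with `a < b`, then for any value `f a < v < f b`
the right end of the closed sublevel set `{f ≤ v}` is a point of increase, and it lies strictly
between `a` and `b` because the intermediate value theorem puts a point of `{f = v}` there.
Since `f` rises strictly across the point of increase `x`, it rises strictly on `[x - ε, x]` or
on `[x, x + ε]`, which therefore contains a point of increase other than `x`.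
-/

open Set

/-- A point of increase of `f : ℝ → ℝ` is `x` such that
`f z < f y` whenever `z < x` and `y > x`. -/
def PtsOfIncrease (f : ℝ → ℝ) : Set ℝ :=
  {x : ℝ | ∀ z < x, ∀ y, x < y → f z < f y}

lemma mem_ptsOfIncrease_of_isGreatest_preimage_Iic {f : ℝ → ℝ} (hf : Monotone f) {v c : ℝ}
    (hc : IsGreatest (f ⁻¹' Iic v) c) : c ∈ PtsOfIncrease f := by
  intro z hz y hy
  have hfz : f z ≤ v := (hf hz.le).trans hc.1
  have hfy : v < f y := not_le.mp fun h => (hc.2 h).not_gt hy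
  exact hfz.trans_lt hfy

lemma exists_mem_ptsOfIncrease_Ioo {f : ℝ → ℝ} (hf : Monotone f) (hcont : Continuous f)
    {a b : ℝ} (hab : a < b) (hfab : f a < f b) : ∃ c ∈ Ioo a b, c ∈ PtsOfIncrease f := by
  obtain ⟨v, hav, hvb⟩ := exists_between hfab
  set S := f ⁻¹' Iic v
  obtain ⟨u, hu, hfu⟩ : v ∈ f '' Icc a b :=
    intermediate_value_Icc hab.le hcont.continuousOn ⟨hav.le, hvb.le⟩
  have hS_lt : ∀ t ∈ S, t < b := fun t ht =>
    not_le.mp fun hbt => (hf hbt).not_gt (lt_of_le_of_lt ht hvb)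
  have hS : IsGreatest S (sSup S) :=
    (isClosed_Iic.preimage hcont).isGreatest_csSup ⟨u, hfu.le⟩
      ⟨b, fun t ht => (hS_lt t ht).le⟩
  have hau : a < u := hu.1.lt_of_ne fun h => hav.ne (h ▸ hfu)
  exact ⟨sSup S, ⟨hau.trans_le (hS.2 hfu.le), hS_lt _ hS.1⟩,
    mem_ptsOfIncrease_of_isGreatest_preimage_Iic hf hS⟩

/-- For a continuous nondecreasing `f`, no point of increase is simultaneously
left-isolated and right-isolated in the set of points of increase. -/
theorem ptsOfIncrease_no_isolated (f : ℝ → ℝ) (hf : Monotone f) (hcont : Continuous f)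
    (x : ℝ) (hx : x ∈ PtsOfIncrease f) :
    ¬((∃ ε > 0, ∀ t ∈ Set.Ioo (x - ε) x, t ∉ PtsOfIncrease f) ∧
      (∃ ε > 0, ∀ t ∈ Set.Ioo x (x + ε), t ∉ PtsOfIncrease f)) := by
  rintro ⟨⟨ε₁, hε₁, hleft⟩, ε₂, hε₂, hright⟩
  have hlt := hx (x - ε₁ / 2) (by linarith) (x + ε₂ / 2) (by linarith)
  rcases lt_or_ge (f (x - ε₁ / 2)) (f x) with hzx | hxz
  · obtain ⟨c, hc, hcI⟩ := exists_mem_ptsOfIncrease_Ioo hf hcont (by linarith) hzx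
    exact hleft c ⟨by linarith [hc.1], hc.2⟩ hcI
  · obtain ⟨c, hc, hcI⟩ := exists_mem_ptsOfIncrease_Ioo hf hcont
      (show x < x + ε₂ / 2 by linarith) (hxz.trans_lt hlt)
    exact hright c ⟨hc.1, by linarith [hc.2]⟩ hcI
end

section
/- Let f : ℝ → ℝ be nondecreasing and suppose a < b with f(a) < f(b). Then there exists x ∈ [a, b] that is a point of increase of f. -/
/-! The supremum `x` of the sublevel set `{t | f t ≤ f a}` works: below `x` the sublevel set still
reaches, so `f z ≤ f a`, while above `x` it does not, so `f a < f y`. Since `f a < f b`, the point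
`b` bounds this set, which puts `x` in `[a, b]`. -/

theorem Monotone.mem_ptsOfIncrease_of_isLUB_sublevel {f : ℝ → ℝ} (hf : Monotone f) {c x : ℝ}
    (hx : IsLUB {t | f t ≤ c} x) : x ∈ PtsOfIncrease f := by
  intro z hz y hy
  obtain ⟨t, htc, hzt, -⟩ := hx.exists_between hz
  have hcy : c < f y := not_le.1 fun hyc => hy.not_ge (hx.1 hyc)
  exact ((hf hzt.le).trans htc).trans_lt hcy

theorem Monotone.mem_upperBounds_sublevel_of_lt {f : ℝ → ℝ} (hf : Monotone f) {c b : ℝ}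
    (hcb : c < f b) : b ∈ upperBounds {t | f t ≤ c} :=
  fun _ htc => le_of_not_gt fun hbt => (hcb.trans_le (hf hbt.le)).not_ge htc

theorem exists_ptOfIncrease_of_lt_general (f : ℝ → ℝ) (hf : Monotone f)
    (a b : ℝ) (hfab : f a < f b) :
    ∃ x ∈ Set.Icc a b, x ∈ PtsOfIncrease f := by
  have ha : a ∈ {t | f t ≤ f a} := le_refl (f a)
  have hb := hf.mem_upperBounds_sublevel_of_lt hfab
  obtain ⟨x, hx⟩ := Real.exists_isLUB ⟨a, ha⟩ ⟨b, hb⟩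
  exact ⟨x, ⟨hx.1 ha, hx.2 hb⟩, hf.mem_ptsOfIncrease_of_isLUB_sublevel hx⟩

/-- If a nondecreasing `f` satisfies `f a < f b` for some `a < b`, then
there is a point of increase in `[a, b]`. -/
theorem exists_ptOfIncrease_of_lt (f : ℝ → ℝ) (hf : Monotone f)
    (a b : ℝ) (hab : a < b) (hfab : f a < f b) :
    ∃ x ∈ Set.Icc a b, x ∈ PtsOfIncrease f :=
  exists_ptOfIncrease_of_lt_general f hf a b hfab
end

section
/- Let f, g : ℝ → ℝ be continuous with f(t) ≤ g(t) for all t, and suppose f(s) < g(s) for some s. Define t₁ = sup{t < s : f(t) = g(t)} (with sup ∅ = −∞) and t₂ = inf{t > s : f(t) = g(t)} (with inf ∅ = +∞). Then the set U = {(x, t) ∈ ℝ² : f(t) < x < g(t), t₁ < t < t₂} is path-connected, hence connected. -/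
/-- Let `f ≤ g` be continuous with `f s < g s`. With `t₁ = sup{t < s : f t = g t}`
(`-∞` if empty) and `t₂ = inf{t > s : f t = g t}` (`+∞` if empty), the open region
`U = {(x,t) : f t < x < g t, t₁ < t < t₂}` is path-connected, hence connected. -/
theorem region_between_pathConnected (f g : ℝ → ℝ) (hfc : Continuous f) (hgc : Continuous g)
    (hfg : ∀ t, f t ≤ g t) (s : ℝ) (hs : f s < g s) :
    IsPathConnected
      {p : ℝ × ℝ |
        f p.2 < p.1 ∧ p.1 < g p.2 ∧
        sSup ((fun t : ℝ => (t : EReal)) '' {t : ℝ | t < s ∧ f t = g t}) < (p.2 : EReal) ∧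
        (p.2 : EReal) < sInf ((fun t : ℝ => (t : EReal)) '' {t : ℝ | s < t ∧ f t = g t})} ∧
    IsConnected
      {p : ℝ × ℝ |
        f p.2 < p.1 ∧ p.1 < g p.2 ∧
        sSup ((fun t : ℝ => (t : EReal)) '' {t : ℝ | t < s ∧ f t = g t}) < (p.2 : EReal) ∧
        (p.2 : EReal) < sInf ((fun t : ℝ => (t : EReal)) '' {t : ℝ | s < t ∧ f t = g t})} := by
  set A : Set EReal := (fun t : ℝ => (t : EReal)) '' {t : ℝ | t < s ∧ f t = g t} with hA
  set B : Set EReal := (fun t : ℝ => (t : EReal)) '' {t : ℝ | s < t ∧ f t = g t} with hB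
  -- a neighborhood of s where f < g
  obtain ⟨ε, hε, hball⟩ : ∃ ε > 0, ∀ t, |t - s| < ε → f t < g t := by
    have hopen : IsOpen {t : ℝ | f t < g t} := isOpen_lt hfc hgc
    obtain ⟨ε, hε, hball⟩ := Metric.isOpen_iff.1 hopen s hs
    exact ⟨ε, hε, fun t ht => hball (by simpa [Real.dist_eq] using ht)⟩
  have ht₁ : sSup A < (s : EReal) := by
    refine lt_of_le_of_lt (sSup_le ?_) (EReal.coe_lt_coe_iff.2 (sub_lt_self s hε))
    rintro x ⟨t, ⟨hts, hfgt⟩, rfl⟩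
    have h2 : ε ≤ |t - s| := not_lt.1 fun h => (hball t h).ne hfgt
    rw [abs_sub_comm, abs_of_pos (sub_pos.2 hts)] at h2
    exact EReal.coe_le_coe_iff.2 (by linarith)
  have ht₂ : (s : EReal) < sInf B := by
    refine lt_of_lt_of_le (EReal.coe_lt_coe_iff.2 (lt_add_of_pos_right s hε)) (le_sInf ?_)
    rintro x ⟨t, ⟨hts, hfgt⟩, rfl⟩
    have h2 : ε ≤ |t - s| := not_lt.1 fun h => (hball t h).ne hfgt
    rw [abs_of_pos (sub_pos.2 hts)] at h2
    exact EReal.coe_le_coe_iff.2 (by linarith)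
  have key : ∀ t : ℝ, sSup A < (t : EReal) → (t : EReal) < sInf B → f t < g t := by
    intro t h1 h2
    rcases (hfg t).lt_or_eq with h | h
    · exact h
    exfalso
    rcases lt_trichotomy t s with hts | rfl | hst
    · exact absurd (le_sSup (show (t : EReal) ∈ A from ⟨t, ⟨hts, h⟩, rfl⟩)) (not_le.2 h1)
    · exact hs.ne h
    · exact absurd (sInf_le (show (t : EReal) ∈ B from ⟨t, ⟨hst, h⟩, rfl⟩)) (not_le.2 h2)
  set I : Set ℝ := {t : ℝ | sSup A < (t : EReal) ∧ (t : EReal) < sInf B} with hI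
  have hIconv : Convex ℝ I := by
    apply Set.OrdConnected.convex
    constructor
    intro a ha b hb c hc
    exact ⟨lt_of_lt_of_le ha.1 (EReal.coe_le_coe_iff.2 hc.1),
      lt_of_le_of_lt (EReal.coe_le_coe_iff.2 hc.2) hb.2⟩
  set S : Set (ℝ × ℝ) := Set.Ioo (0 : ℝ) 1 ×ˢ I with hS
  have hSconv : Convex ℝ S := (convex_Ioo 0 1).prod hIconv
  have hSne : ((1/2 : ℝ), s) ∈ S := ⟨⟨by norm_num, by norm_num⟩, ht₁, ht₂⟩
  have hSpc : IsPathConnected S := hSconv.isPathConnected ⟨_, hSne⟩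
  set ψ : ℝ × ℝ → ℝ × ℝ := fun p => (f p.2 + p.1 * (g p.2 - f p.2), p.2) with hψ
  have hψc : Continuous ψ := by
    apply Continuous.prodMk
    · exact (hfc.comp continuous_snd).add
        (continuous_fst.mul ((hgc.comp continuous_snd).sub (hfc.comp continuous_snd)))
    · exact continuous_snd
  have himg : {p : ℝ × ℝ | f p.2 < p.1 ∧ p.1 < g p.2 ∧
      sSup A < (p.2 : EReal) ∧ (p.2 : EReal) < sInf B} = ψ '' S := by
    ext ⟨x, t⟩
    simp only [Set.mem_setOf_eq, Set.mem_image, hS, Set.mem_prod, Set.mem_Ioo, hψ,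
      Prod.mk.injEq, Prod.exists, hI]
    constructor
    · rintro ⟨h1, h2, h3, h4⟩
      have hlt := key t h3 h4
      have hd : 0 < g t - f t := sub_pos.2 hlt
      refine ⟨(x - f t) / (g t - f t), t, ⟨⟨div_pos (sub_pos.2 h1) hd,
        (div_lt_one hd).2 (by linarith)⟩, h3, h4⟩, by field_simp; ring, rfl⟩
    · rintro ⟨a, u, ⟨⟨ha0, ha1⟩, hu1, hu2⟩, hx, rfl⟩
      have hlt := key u hu1 hu2
      subst hx
      exact ⟨by nlinarith, by nlinarith, hu1, hu2⟩
  have hpc : IsPathConnected {p : ℝ × ℝ | f p.2 < p.1 ∧ p.1 < g p.2 ∧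
      sSup A < (p.2 : EReal) ∧ (p.2 : EReal) < sInf B} := himg ▸ hSpc.image hψc
  exact ⟨hpc, hpc.isConnected⟩
end

section
/- Let f, g : ℝ → ℝ be continuous with f ≤ g pointwise and f(s) < g(s) for some s. Let t₁ = sup{t < s : f(t) = g(t)}, t₂ = inf{t > s : f(t) = g(t)}, and U = {(x, t) : f(t) < x < g(t), t₁ < t < t₂}. Let Γ_f = {(f(t), t) : t ∈ ℝ}, Γ_g = {(g(t), t) : t ∈ ℝ}, and let V be any open subset of ℝ² \ (Γ_f ∪ Γ_g) containing U. Then U is a connected component of V. -/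
/-!
The region `U` is open, and it is connected because it is the continuous image of
`(t₁, t₂) × (0, 1)` under `(t, λ) ↦ (f t + λ (g t - f t), t)`. It is also closed in `V`: a point
of `V` in the closure of `U` lies off both graphs, hence strictly between them, over a parameter
`t ∈ [t₁, t₂]` with `f t < g t`; as `t₁` and `t₂` are limits of zeros of `g - f`, this forces
`t ∈ (t₁, t₂)`. An open, connected subset of `V` that is closed in `V` is a component of `V`.
-/

open Set Topology

theorem connectedComponentIn_eq_of_isOpen_of_inter_closure_subset {X : Type*}
    [TopologicalSpace X] {U V : Set X} (hUo : IsOpen U) (hUc : IsPreconnected U) (hUV : U ⊆ V)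
    (hcl : V ∩ closure U ⊆ U) {p : X} (hp : p ∈ U) : connectedComponentIn V p = U := by
  refine subset_antisymm ?_ (hUc.subset_connectedComponentIn hp hUV)
  have hcover : connectedComponentIn V p ⊆ U ∪ (closure U)ᶜ := fun q hq ↦ by
    by_cases hq' : q ∈ closure U
    · exact Or.inl (hcl ⟨connectedComponentIn_subset V p hq, hq'⟩)
    · exact Or.inr hq'
  exact isPreconnected_connectedComponentIn.subset_left_of_subset_union hUo
    isClosed_closure.isOpen_compl (disjoint_compl_right_iff_subset.2 subset_closure) hcover
    ⟨p, mem_connectedComponentIn (hUV hp), hp⟩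

section RegionBetween

variable {α : Type*} {f g : α → ℝ} {s : Set α}

theorem regionBetween_eq_image_prod_Ioo (hfg : ∀ x ∈ s, f x < g x) :
    regionBetween f g s =
      (fun q : α × ℝ ↦ (q.1, f q.1 + q.2 * (g q.1 - f q.1))) '' s ×ˢ Ioo 0 1 := by
  ext ⟨x, y⟩
  constructor
  · rintro ⟨hx, hfy, hyg⟩
    have hgap : 0 < g x - f x := sub_pos.2 (hfg x hx)
    refine ⟨(x, (y - f x) / (g x - f x)), ⟨hx, ?_, ?_⟩, ?_⟩
    · exact div_pos (sub_pos.2 hfy) hgap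
    · exact (div_lt_one hgap).2 (by linarith)
    · simp only [div_mul_cancel₀ _ hgap.ne', add_sub_cancel]
  · rintro ⟨⟨x, l⟩, ⟨hx, hl₀, hl₁⟩, hxy⟩
    obtain ⟨rfl, rfl⟩ := Prod.ext_iff.1 hxy
    have hgap : 0 < g x - f x := sub_pos.2 (hfg x hx)
    exact ⟨hx, by dsimp only; nlinarith, by dsimp only; nlinarith⟩

variable [TopologicalSpace α]

theorem isOpen_regionBetween (hf : Continuous f) (hg : Continuous g) (hs : IsOpen s) :
    IsOpen (regionBetween f g s) :=
  (hs.preimage continuous_fst).inter <|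
    (isOpen_lt (hf.comp continuous_fst) continuous_snd).inter
      (isOpen_lt continuous_snd (hg.comp continuous_fst))

theorem isPreconnected_regionBetween (hf : Continuous f) (hg : Continuous g)
    (hs : IsPreconnected s) (hfg : ∀ x ∈ s, f x < g x) : IsPreconnected (regionBetween f g s) := by
  rw [regionBetween_eq_image_prod_Ioo hfg]
  exact (hs.prod isPreconnected_Ioo).image _ (by fun_prop)

theorem closure_regionBetween_subset (hf : Continuous f) (hg : Continuous g) :
    closure (regionBetween f g s) ⊆ {p | p.1 ∈ closure s ∧ p.2 ∈ Icc (f p.1) (g p.1)} :=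
  closure_minimal (fun _ hp ↦ ⟨subset_closure hp.1, hp.2.1.le, hp.2.2.le⟩) <|
    (isClosed_closure.preimage continuous_fst).inter <|
      (isClosed_le (hf.comp continuous_fst) continuous_snd).inter
        (isClosed_le continuous_snd (hg.comp continuous_fst))

theorem inter_closure_regionBetween_subset (hf : Continuous f) (hg : Continuous g)
    (hs : closure s ∩ {x | f x < g x} ⊆ s) {T : Set (α × ℝ)}
    (hT : T ⊆ ({p | p.2 = f p.1} ∪ {p | p.2 = g p.1})ᶜ) :
    T ∩ closure (regionBetween f g s) ⊆ regionBetween f g s := by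
  rintro p ⟨hpT, hp⟩
  obtain ⟨hps, hfp, hgp⟩ := closure_regionBetween_subset hf hg hp
  obtain ⟨hpf, hpg⟩ := not_or.1 (hT hpT : ¬(p.2 = f p.1 ∨ p.2 = g p.1))
  have hfp' : f p.1 < p.2 := hfp.lt_of_ne (Ne.symm hpf)
  have hpg' : p.2 < g p.1 := hgp.lt_of_ne hpg
  exact ⟨hs ⟨hps, hfp'.trans hpg'⟩, hfp', hpg'⟩

end RegionBetween

section GapInterval

noncomputable def lastBefore (Z : Set ℝ) (s : ℝ) : EReal :=
  sSup ((↑) '' {t | t < s ∧ t ∈ Z})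

noncomputable def firstAfter (Z : Set ℝ) (s : ℝ) : EReal :=
  sInf ((↑) '' {t | s < t ∧ t ∈ Z})

/-- The interval `(t₁, t₂)`, where `t₁ = ⊥` (resp. `t₂ = ⊤`) if `Z` has no point below (resp.
above) `s`. -/
def gapInterval (Z : Set ℝ) (s : ℝ) : Set ℝ :=
  (↑) ⁻¹' Ioo (lastBefore Z s) (firstAfter Z s)

theorem mem_closure_of_sSup_image_coe_eq {S : Set ℝ} {r : ℝ}
    (h : sSup (((↑) : ℝ → EReal) '' S) = r) : r ∈ closure S := by
  have hS : S.Nonempty := by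
    by_contra! hS
    simp [hS] at h
  rw [EReal.isEmbedding_coe.closure_eq_preimage_closure_image, mem_preimage, ← h]
  exact sSup_mem_closure (hS.image _)

theorem mem_closure_of_sInf_image_coe_eq {S : Set ℝ} {r : ℝ}
    (h : sInf (((↑) : ℝ → EReal) '' S) = r) : r ∈ closure S := by
  have hS : S.Nonempty := by
    by_contra! hS
    simp [hS] at h
  rw [EReal.isEmbedding_coe.closure_eq_preimage_closure_image, mem_preimage, ← h]
  exact sInf_mem_closure (hS.image _)

variable {Z : Set ℝ} {s : ℝ}

theorem coe_le_lastBefore {t : ℝ} (ht : t ∈ Z) (hts : t < s) : (t : EReal) ≤ lastBefore Z s :=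
  le_sSup (mem_image_of_mem _ ⟨hts, ht⟩)

theorem firstAfter_le_coe {t : ℝ} (ht : t ∈ Z) (hst : s < t) : firstAfter Z s ≤ t :=
  sInf_le (mem_image_of_mem _ ⟨hst, ht⟩)

theorem mem_of_lastBefore_eq_coe (hZ : IsClosed Z) {r : ℝ} (h : lastBefore Z s = r) : r ∈ Z :=
  hZ.closure_subset_iff.2 (fun _ ht ↦ ht.2) (mem_closure_of_sSup_image_coe_eq h)

theorem mem_of_firstAfter_eq_coe (hZ : IsClosed Z) {r : ℝ} (h : firstAfter Z s = r) : r ∈ Z :=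
  hZ.closure_subset_iff.2 (fun _ ht ↦ ht.2) (mem_closure_of_sInf_image_coe_eq h)

theorem isOpen_gapInterval : IsOpen (gapInterval Z s) :=
  isOpen_Ioo.preimage continuous_coe_real_ereal

theorem isPreconnected_gapInterval : IsPreconnected (gapInterval Z s) :=
  (ordConnected_Ioo.preimage_mono EReal.coe_strictMono.monotone).isPreconnected

theorem gapInterval_subset_compl (hs : s ∉ Z) : gapInterval Z s ⊆ Zᶜ := by
  rintro u ⟨hu₁, hu₂⟩ hu
  rcases lt_trichotomy u s with hus | rfl | hsu
  · exact (coe_le_lastBefore hu hus).not_gt hu₁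
  · exact hs hu
  · exact (firstAfter_le_coe hu hsu).not_gt hu₂

theorem closure_gapInterval_inter_compl_subset (hZ : IsClosed Z) :
    closure (gapInterval Z s) ∩ Zᶜ ⊆ gapInterval Z s := by
  rintro u ⟨hu, huZ⟩
  obtain ⟨hu₁, hu₂⟩ := closure_minimal (preimage_mono Ioo_subset_Icc_self)
    (isClosed_Icc.preimage continuous_coe_real_ereal) hu
  exact ⟨hu₁.lt_of_ne fun h ↦ huZ (mem_of_lastBefore_eq_coe hZ h),
    hu₂.lt_of_ne fun h ↦ huZ (mem_of_firstAfter_eq_coe hZ h.symm)⟩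

end GapInterval

theorem region_between_is_component_general (f g : ℝ → ℝ) (hfc : Continuous f) (hgc : Continuous g)
    (hfg : ∀ t, f t ≤ g t) (s : ℝ) (hs : f s < g s)
    (U : Set (ℝ × ℝ))
    (hU : U =
      {p : ℝ × ℝ |
        f p.2 < p.1 ∧ p.1 < g p.2 ∧
        sSup ((fun t : ℝ => (t : EReal)) '' {t : ℝ | t < s ∧ f t = g t}) < (p.2 : EReal) ∧
        (p.2 : EReal) < sInf ((fun t : ℝ => (t : EReal)) '' {t : ℝ | s < t ∧ f t = g t})})
    (V : Set (ℝ × ℝ))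
    (hVdisj : V ⊆ ({p : ℝ × ℝ | p.1 = f p.2} ∪ {p : ℝ × ℝ | p.1 = g p.2})ᶜ)
    (hUV : U ⊆ V) :
    ∀ p ∈ U, connectedComponentIn V p = U := by
  set Z : Set ℝ := {t | f t = g t}
  set I := gapInterval Z s
  have hU' : U = Prod.swap ⁻¹' regionBetween f g I := by
    rw [hU]
    ext p
    exact ⟨fun ⟨h₁, h₂, h₃⟩ ↦ ⟨h₃, h₁, h₂⟩, fun ⟨h₃, h₁, h₂⟩ ↦ ⟨h₁, h₂, h₃⟩⟩
  have hI : ∀ t ∈ I, f t < g t := fun t ht ↦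
    (hfg t).lt_of_ne (gapInterval_subset_compl (Z := Z) hs.ne ht)
  have hIcl : closure I ∩ {t | f t < g t} ⊆ I := fun t ht ↦
    closure_gapInterval_inter_compl_subset (isClosed_eq hfc hgc) ⟨ht.1, ht.2.ne⟩
  intro p hp
  subst hU'
  refine connectedComponentIn_eq_of_isOpen_of_inter_closure_subset
    ((isOpen_regionBetween hfc hgc isOpen_gapInterval).preimage continuous_swap) ?_ hUV ?_ hp
  · rw [← image_swap_eq_preimage_swap]
    exact (isPreconnected_regionBetween hfc hgc isPreconnected_gapInterval hI).image _
      continuous_swap.continuousOn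
  · rw [← Homeomorph.coe_prodComm, ← Homeomorph.preimage_closure]
    exact fun q hq ↦
      inter_closure_regionBetween_subset hfc hgc hIcl (T := Prod.swap ⁻¹' V)
        (fun _ hr ↦ hVdisj hr) ⟨hq.1, hq.2⟩

/-- With `f ≤ g` continuous, `f s < g s`, `t₁, t₂` as in Lemma B.1, and
`U` the open region strictly between the graphs over `(t₁, t₂)`: for any open
`V ⊆ ℝ² \ (Γ_f ∪ Γ_g)` containing `U`, the set `U` is a connected component of `V`. -/
theorem region_between_is_component (f g : ℝ → ℝ) (hfc : Continuous f) (hgc : Continuous g)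
    (hfg : ∀ t, f t ≤ g t) (s : ℝ) (hs : f s < g s)
    (U : Set (ℝ × ℝ))
    (hU : U =
      {p : ℝ × ℝ |
        f p.2 < p.1 ∧ p.1 < g p.2 ∧
        sSup ((fun t : ℝ => (t : EReal)) '' {t : ℝ | t < s ∧ f t = g t}) < (p.2 : EReal) ∧
        (p.2 : EReal) < sInf ((fun t : ℝ => (t : EReal)) '' {t : ℝ | s < t ∧ f t = g t})})
    (V : Set (ℝ × ℝ)) (hVopen : IsOpen V)
    (hVdisj : V ⊆ ({p : ℝ × ℝ | p.1 = f p.2} ∪ {p : ℝ × ℝ | p.1 = g p.2})ᶜ)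
    (hUV : U ⊆ V) :
    ∀ p ∈ U, connectedComponentIn V p = U :=
  region_between_is_component_general f g hfc hgc hfg s hs U hU V hVdisj hUV
end

section
/- Let f, g : ℝ → ℝ be continuous with f ≤ g pointwise, and let H = {t ∈ ℝ : f(t) < g(t)}. For each connected component I of the open set H, let O_I = {(x, t) : t ∈ I, f(t) < x < g(t)}. Then the sets O_I, as I ranges over the connected components of H, are open, pairwise disjoint, connected, and are exactly the connected components of the open set {(x, t) ∈ ℝ² : f(t) < x < g(t)}. -/
section Aux

variable (f g : ℝ → ℝ)

private lemma hH_open (hfc : Continuous f) (hgc : Continuous g) :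
    IsOpen {t : ℝ | f t < g t} := isOpen_lt hfc hgc

private lemma O_open (hfc : Continuous f) (hgc : Continuous g) (t : ℝ) :
    IsOpen {p : ℝ × ℝ | p.2 ∈ connectedComponentIn {t : ℝ | f t < g t} t ∧
        f p.2 < p.1 ∧ p.1 < g p.2} := by
  have h1 : IsOpen (connectedComponentIn {t : ℝ | f t < g t} t) :=
    (hH_open f g hfc hgc).connectedComponentIn
  have : {p : ℝ × ℝ | p.2 ∈ connectedComponentIn {t : ℝ | f t < g t} t ∧
      f p.2 < p.1 ∧ p.1 < g p.2} =
      (Prod.snd ⁻¹' connectedComponentIn {t : ℝ | f t < g t} t) ∩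
      ({p : ℝ × ℝ | f p.2 < p.1} ∩ {p : ℝ × ℝ | p.1 < g p.2}) := by
    ext p; simp [and_assoc]
  rw [this]
  exact (h1.preimage continuous_snd).inter
    ((isOpen_lt (hfc.comp continuous_snd) continuous_fst).inter
      (isOpen_lt continuous_fst (hgc.comp continuous_snd)))

private lemma O_conn (hfc : Continuous f) (hgc : Continuous g) (t : ℝ)
    (ht : f t < g t) :
    IsConnected {p : ℝ × ℝ | p.2 ∈ connectedComponentIn {t : ℝ | f t < g t} t ∧
        f p.2 < p.1 ∧ p.1 < g p.2} := by
  set H := {t : ℝ | f t < g t} with hHdef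
  set C := connectedComponentIn H t with hCdef
  have hCsub : C ⊆ H := connectedComponentIn_subset _ _
  have hCconn : IsConnected C := (isConnected_connectedComponentIn_iff).2 ht
  have key : {p : ℝ × ℝ | p.2 ∈ C ∧ f p.2 < p.1 ∧ p.1 < g p.2} =
      (fun q : ℝ × ℝ => (f q.2 + q.1 * (g q.2 - f q.2), q.2)) '' (Set.Ioo (0:ℝ) 1 ×ˢ C) := by
    ext p
    constructor
    · rintro ⟨hpC, h1, h2⟩
      have hpos : 0 < g p.2 - f p.2 := by
        have := hCsub hpC; simp only [hHdef, Set.mem_setOf_eq] at this; linarith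
      refine ⟨((p.1 - f p.2) / (g p.2 - f p.2), p.2), ⟨⟨?_, ?_⟩, hpC⟩, ?_⟩
      · exact div_pos (by linarith) hpos
      · rw [div_lt_one hpos]; linarith
      · have hx : f p.2 + (p.1 - f p.2) / (g p.2 - f p.2) * (g p.2 - f p.2) = p.1 := by
          field_simp; ring
        simp only []; rw [Prod.ext_iff]; exact ⟨hx, rfl⟩
    · rintro ⟨⟨s, u⟩, ⟨⟨hs0, hs1⟩, huC⟩, rfl⟩
      have hpos : 0 < g u - f u := by
        have := hCsub huC; simp only [hHdef, Set.mem_setOf_eq] at this; linarith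
      refine ⟨huC, ?_, ?_⟩ <;> simp only <;> nlinarith
  rw [key]
  refine IsConnected.image ?_ _ ?_
  · exact (isConnected_Ioo one_pos).prod hCconn
  · exact Continuous.continuousOn (by fun_prop)

private lemma disjoint_O (t t' : ℝ)
    (hne : connectedComponentIn {t : ℝ | f t < g t} t ≠
      connectedComponentIn {t : ℝ | f t < g t} t') :
    Disjoint
      {p : ℝ × ℝ | p.2 ∈ connectedComponentIn {t : ℝ | f t < g t} t ∧
        f p.2 < p.1 ∧ p.1 < g p.2}
      {p : ℝ × ℝ | p.2 ∈ connectedComponentIn {t : ℝ | f t < g t} t' ∧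
        f p.2 < p.1 ∧ p.1 < g p.2} := by
  rw [Set.disjoint_left]
  rintro p ⟨hp1, -⟩ ⟨hp2, -⟩
  exact hne ((connectedComponentIn_eq hp1).trans (connectedComponentIn_eq hp2).symm)

end Aux

/-- For continuous `f ≤ g` and `H = {t : f t < g t}`, the sets
`O_I = {(x,t) : t ∈ I, f t < x < g t}`, for `I` a connected component of `H`, are
open, connected, pairwise disjoint, and are exactly the connected components of
`Ω = {(x,t) : f t < x < g t}`. -/
theorem components_of_region_between (f g : ℝ → ℝ) (hfc : Continuous f) (hgc : Continuous g)
    (hfg : ∀ t, f t ≤ g t) :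
    (∀ t ∈ {t : ℝ | f t < g t},
      IsOpen {p : ℝ × ℝ | p.2 ∈ connectedComponentIn {t : ℝ | f t < g t} t ∧
          f p.2 < p.1 ∧ p.1 < g p.2} ∧
      IsConnected {p : ℝ × ℝ | p.2 ∈ connectedComponentIn {t : ℝ | f t < g t} t ∧
          f p.2 < p.1 ∧ p.1 < g p.2}) ∧
    (∀ t ∈ {t : ℝ | f t < g t}, ∀ t' ∈ {t : ℝ | f t < g t},
      connectedComponentIn {t : ℝ | f t < g t} t ≠
        connectedComponentIn {t : ℝ | f t < g t} t' →
      Disjoint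
        {p : ℝ × ℝ | p.2 ∈ connectedComponentIn {t : ℝ | f t < g t} t ∧
          f p.2 < p.1 ∧ p.1 < g p.2}
        {p : ℝ × ℝ | p.2 ∈ connectedComponentIn {t : ℝ | f t < g t} t' ∧
          f p.2 < p.1 ∧ p.1 < g p.2}) ∧
    (∀ p : ℝ × ℝ, f p.2 < p.1 → p.1 < g p.2 →
      connectedComponentIn {q : ℝ × ℝ | f q.2 < q.1 ∧ q.1 < g q.2} p =
        {q : ℝ × ℝ | q.2 ∈ connectedComponentIn {t : ℝ | f t < g t} p.2 ∧
          f q.2 < q.1 ∧ q.1 < g q.2}) := by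
  refine ⟨fun t ht => ⟨O_open f g hfc hgc t, O_conn f g hfc hgc t ht⟩,
    fun t _ t' _ hne => disjoint_O f g t t' hne, fun p hp1 hp2 => ?_⟩
  set H := {t : ℝ | f t < g t} with hHdef
  set Ω := {q : ℝ × ℝ | f q.2 < q.1 ∧ q.1 < g q.2} with hΩdef
  set O := {q : ℝ × ℝ | q.2 ∈ connectedComponentIn H p.2 ∧ f q.2 < q.1 ∧ q.1 < g q.2}
    with hOdef
  have hp2H : p.2 ∈ H := lt_trans hp1 hp2
  have hpO : p ∈ O := ⟨mem_connectedComponentIn hp2H, hp1, hp2⟩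
  have hOsubΩ : O ⊆ Ω := fun q hq => ⟨hq.2.1, hq.2.2⟩
  apply Set.Subset.antisymm
  · -- component ⊆ O
    intro q hq
    have hqΩ : q ∈ Ω := connectedComponentIn_subset _ _ hq
    have hconn : IsPreconnected (connectedComponentIn Ω p) :=
      (isPreconnected_connectedComponentIn)
    have himg : IsPreconnected (Prod.snd '' connectedComponentIn Ω p) :=
      hconn.image _ continuous_snd.continuousOn
    have hsubH : Prod.snd '' connectedComponentIn Ω p ⊆ H := by
      rintro x ⟨r, hr, rfl⟩
      have := connectedComponentIn_subset Ω p hr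
      exact lt_trans this.1 this.2
    have hmem : p.2 ∈ Prod.snd '' connectedComponentIn Ω p :=
      ⟨p, mem_connectedComponentIn ⟨hp1, hp2⟩, rfl⟩
    have hsub : Prod.snd '' connectedComponentIn Ω p ⊆ connectedComponentIn H p.2 :=
      himg.subset_connectedComponentIn hmem hsubH
    exact ⟨hsub ⟨q, hq, rfl⟩, hqΩ.1, hqΩ.2⟩
  · -- O ⊆ component
    exact (O_conn f g hfc hgc p.2 hp2H).isPreconnected.subset_connectedComponentIn hpO hOsubΩ
end

section
/- Let a < b be real numbers and suppose [a, b] = ⋃_{i ∈ 𝕀} F_i where 𝕀 ⊆ ℕ is nonempty and the sets F_i are pairwise disjoint, nonempty, and closed. Then 𝕀 is a singleton; equivalently, a nondegenerate compact interval cannot be partitioned into two or more (countably many) disjoint nonempty closed sets. -/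
open Set


/-- The set of relative frontier points of the partition. -/
def sierK (a b : ℝ) (I : Set ℕ) (F : ℕ → Set ℝ) : Set ℝ :=
  ⋃ j ∈ I, F j ∩ closure (Icc a b \ F j)

lemma sierK_subset (a b : ℝ) (I : Set ℕ) (F : ℕ → Set ℝ)
    (hcover : ⋃ i ∈ I, F i = Set.Icc a b) :
    sierK a b I F ⊆ Icc a b := by
  intro x hx
  rw [sierK, mem_iUnion₂] at hx
  obtain ⟨j, hj, hxj, -⟩ := hx
  rw [← hcover]; exact mem_iUnion₂.2 ⟨j, hj, hxj⟩

lemma sier_key_lt (a b : ℝ) (I : Set ℕ) (F : ℕ → Set ℝ)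
    (hclosed : ∀ i ∈ I, IsClosed (F i))
    (hdisj : ∀ i ∈ I, ∀ j ∈ I, i ≠ j → Disjoint (F i) (F j))
    (hcover : ⋃ i ∈ I, F i = Set.Icc a b)
    {i : ℕ} {x y : ℝ} (hi : i ∈ I) (hx : x ∈ F i)
    (hy : y ∈ Icc a b) (hyF : y ∉ F i) (hxy : x < y) :
    ∃ s ∈ sierK a b I F, s ∈ Icc x y ∧ s ∉ F i := by
  have hxI : x ∈ Icc a b := by
    rw [← hcover]; exact mem_iUnion₂.2 ⟨i, hi, hx⟩
  obtain ⟨j, hj, hyj⟩ : ∃ j ∈ I, y ∈ F j := by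
    have := hy; rw [← hcover, mem_iUnion₂] at this; simpa using this
  have hij : i ≠ j := by rintro rfl; exact hyF hyj
  set S : Set ℝ := F j ∩ Icc x y with hS
  have hSne : S.Nonempty := ⟨y, hyj, le_of_lt hxy, le_refl y⟩
  have hSbdd : BddBelow S := ⟨x, fun t ht => ht.2.1⟩
  have hSclosed : IsClosed S := (hclosed j hj).inter isClosed_Icc
  set s := sInf S with hs
  have hsS : s ∈ S := hSclosed.csInf_mem hSne hSbdd
  have hsj : s ∈ F j := hsS.1
  have hsIcc : s ∈ Icc x y := hsS.2
  have hsni : s ∉ F i := fun h =>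
    (hdisj i hi j hj hij).ne_of_mem h hsj rfl
  have hxs : x < s := by
    rcases lt_or_eq_of_le hsIcc.1 with h | h
    · exact h
    · exact absurd (h ▸ hsj) (fun h' => hsni (h ▸ hx))
  -- points in [x, s) are in Icc a b \ F j
  have hsub : Ico x s ⊆ Icc a b \ F j := by
    intro t ht
    refine ⟨⟨le_trans hxI.1 ht.1, le_trans (le_of_lt ht.2) (le_trans hsIcc.2 hy.2)⟩, ?_⟩
    intro htj
    exact absurd (csInf_le hSbdd ⟨htj, ht.1, le_trans ht.2.le (hsIcc.2)⟩) (not_le.2 ht.2)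
  have hscl : s ∈ closure (Icc a b \ F j) := by
    have h1 : s ∈ closure (Ico x s) := by
      rw [closure_Ico (ne_of_lt hxs)]; exact ⟨le_of_lt hxs, le_refl s⟩
    exact closure_mono hsub h1
  exact ⟨s, mem_iUnion₂.2 ⟨j, hj, hsj, hscl⟩, hsIcc, hsni⟩

lemma sier_key_gt (a b : ℝ) (I : Set ℕ) (F : ℕ → Set ℝ)
    (hclosed : ∀ i ∈ I, IsClosed (F i))
    (hdisj : ∀ i ∈ I, ∀ j ∈ I, i ≠ j → Disjoint (F i) (F j))
    (hcover : ⋃ i ∈ I, F i = Set.Icc a b)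
    {i : ℕ} {x y : ℝ} (hi : i ∈ I) (hx : x ∈ F i)
    (hy : y ∈ Icc a b) (hyF : y ∉ F i) (hxy : y < x) :
    ∃ s ∈ sierK a b I F, s ∈ Icc y x ∧ s ∉ F i := by
  have hxI : x ∈ Icc a b := by
    rw [← hcover]; exact mem_iUnion₂.2 ⟨i, hi, hx⟩
  obtain ⟨j, hj, hyj⟩ : ∃ j ∈ I, y ∈ F j := by
    have := hy; rw [← hcover, mem_iUnion₂] at this; simpa using this
  have hij : i ≠ j := by rintro rfl; exact hyF hyj
  set S : Set ℝ := F j ∩ Icc y x with hS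
  have hSne : S.Nonempty := ⟨y, hyj, le_refl y, le_of_lt hxy⟩
  have hSbdd : BddAbove S := ⟨x, fun t ht => ht.2.2⟩
  have hSclosed : IsClosed S := (hclosed j hj).inter isClosed_Icc
  set s := sSup S with hs
  have hsS : s ∈ S := hSclosed.csSup_mem hSne hSbdd
  have hsj : s ∈ F j := hsS.1
  have hsIcc : s ∈ Icc y x := hsS.2
  have hsni : s ∉ F i := fun h =>
    (hdisj i hi j hj hij).ne_of_mem h hsj rfl
  have hxs : s < x := by
    rcases lt_or_eq_of_le hsIcc.2 with h | h
    · exact h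
    · exact absurd (h ▸ hsj) (fun h' => hsni (h ▸ hx))
  have hsub : Ioc s x ⊆ Icc a b \ F j := by
    intro t ht
    refine ⟨⟨le_trans hy.1 (le_trans hsIcc.1 ht.1.le), le_trans ht.2 hxI.2⟩, ?_⟩
    intro htj
    exact absurd (le_csSup hSbdd ⟨htj, le_trans hsIcc.1 ht.1.le, ht.2⟩) (not_le.2 ht.1)
  have hscl : s ∈ closure (Icc a b \ F j) := by
    have h1 : s ∈ closure (Ioc s x) := by
      rw [closure_Ioc (ne_of_lt hxs)]; exact ⟨le_refl s, le_of_lt hxs⟩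
    exact closure_mono hsub h1
  exact ⟨s, mem_iUnion₂.2 ⟨j, hj, hsj, hscl⟩, hsIcc, hsni⟩

lemma sier_key' (a b : ℝ) (I : Set ℕ) (F : ℕ → Set ℝ)
    (hclosed : ∀ i ∈ I, IsClosed (F i))
    (hdisj : ∀ i ∈ I, ∀ j ∈ I, i ≠ j → Disjoint (F i) (F j))
    (hcover : ⋃ i ∈ I, F i = Set.Icc a b)
    {i : ℕ} {x y : ℝ} (hi : i ∈ I) (hx : x ∈ F i)
    (hy : y ∈ Icc a b) (hyF : y ∉ F i) :
    ∃ s ∈ sierK a b I F, |s - x| ≤ |y - x| ∧ s ∉ F i := by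
  rcases lt_trichotomy x y with h | h | h
  · obtain ⟨s, hsK, hsIcc, hsni⟩ := sier_key_lt a b I F hclosed hdisj hcover hi hx hy hyF h
    refine ⟨s, hsK, ?_, hsni⟩
    rw [abs_of_nonneg (by linarith [hsIcc.1]), abs_of_nonneg (by linarith)]
    linarith [hsIcc.2]
  · exact absurd (h ▸ hx) hyF
  · obtain ⟨s, hsK, hsIcc, hsni⟩ := sier_key_gt a b I F hclosed hdisj hcover hi hx hy hyF h
    refine ⟨s, hsK, ?_, hsni⟩
    rw [abs_of_nonpos (by linarith [hsIcc.2]), abs_of_nonpos (by linarith)]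
    linarith [hsIcc.1]

lemma sierK_closed (a b : ℝ) (I : Set ℕ) (F : ℕ → Set ℝ)
    (hdisj : ∀ i ∈ I, ∀ j ∈ I, i ≠ j → Disjoint (F i) (F j))
    (hcover : ⋃ i ∈ I, F i = Set.Icc a b) :
    IsClosed (sierK a b I F) := by
  rw [← closure_subset_iff_isClosed]
  intro x hx
  have hKsub : sierK a b I F ⊆ Icc a b := by
    intro z hz
    rw [sierK, mem_iUnion₂] at hz
    obtain ⟨j, hj, hzj, -⟩ := hz
    rw [← hcover]; exact mem_iUnion₂.2 ⟨j, hj, hzj⟩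
  have hxI : x ∈ Icc a b := by
    have := closure_mono hKsub hx
    rwa [closure_Icc] at this
  obtain ⟨i, hi, hxi⟩ : ∃ i ∈ I, x ∈ F i := by
    have := hxI; rw [← hcover, mem_iUnion₂] at this; simpa using this
  by_contra hxK
  have hxncl : x ∉ closure (Icc a b \ F i) := by
    intro h
    exact hxK (mem_iUnion₂.2 ⟨i, hi, hxi, h⟩)
  rw [mem_closure_iff] at hxncl
  push_neg at hxncl
  obtain ⟨V, hVopen, hxV, hVempty⟩ := hxncl
  rw [mem_closure_iff] at hx
  obtain ⟨y, hyV, hyK⟩ := hx V hVopen hxV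
  rw [sierK, mem_iUnion₂] at hyK
  obtain ⟨j, hj, hyj, hycl⟩ := hyK
  have hyIcc : y ∈ Icc a b := by
    rw [← hcover]; exact mem_iUnion₂.2 ⟨j, hj, hyj⟩
  have hji : j = i := by
    by_contra hne
    have hyi : y ∈ F i := by
      by_contra hyi
      have hne2 : (V ∩ (Icc a b \ F i)).Nonempty := ⟨y, hyV, hyIcc, hyi⟩
      rw [hVempty] at hne2
      exact hne2.ne_empty rfl
    exact (hdisj j hj i hi hne).ne_of_mem hyj hyi rfl
  subst hji
  rw [mem_closure_iff] at hycl
  obtain ⟨z, hzV, hzIcc, hzj⟩ := hycl V hVopen hyV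
  have hne2 : (V ∩ (Icc a b \ F j)).Nonempty := ⟨z, hzV, hzIcc, hzj⟩
  rw [hVempty] at hne2
  exact hne2.ne_empty rfl

/-- Sierpiński's theorem for a compact interval: if `[a,b]`, `a < b`, is partitioned
into countably many pairwise disjoint nonempty closed sets, the index set is a singleton. -/
theorem sierpinski_interval (a b : ℝ) (hab : a < b)
    (I : Set ℕ) (hI : I.Nonempty) (F : ℕ → Set ℝ)
    (hne : ∀ i ∈ I, (F i).Nonempty)
    (hclosed : ∀ i ∈ I, IsClosed (F i))
    (hdisj : ∀ i ∈ I, ∀ j ∈ I, i ≠ j → Disjoint (F i) (F j))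
    (hcover : ⋃ i ∈ I, F i = Set.Icc a b) :
    ∃ i, I = {i} := by
  classical
  by_contra hcon
  push_neg at hcon
  obtain ⟨p, hp⟩ := hI
  obtain ⟨q, hq, hqp⟩ : ∃ q ∈ I, q ≠ p := by
    by_contra h
    push_neg at h
    exact hcon p (Set.eq_singleton_iff_unique_mem.2 ⟨hp, h⟩)
  -- K is nonempty
  set K := sierK a b I F with hK
  have hKsub : K ⊆ Icc a b := sierK_subset a b I F hcover
  have hKclosed : IsClosed K := sierK_closed a b I F hdisj hcover
  have hKne : K.Nonempty := by
    obtain ⟨u, hu⟩ := hne p hp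
    obtain ⟨v, hv⟩ := hne q hq
    have hvI : v ∈ Icc a b := by
      rw [← hcover]; exact mem_iUnion₂.2 ⟨q, hq, hv⟩
    have hvnp : v ∉ F p := fun h => (hdisj p hp q hq (Ne.symm hqp)).ne_of_mem h hv rfl
    obtain ⟨s, hsK, -⟩ := sier_key' a b I F hclosed hdisj hcover hp hu hvI hvnp
    exact ⟨s, hsK⟩
  -- K with subtype topology is a nonempty complete metric space, hence Baire
  haveI : Nonempty K := hKne.to_subtype
  haveI : CompleteSpace K := hKclosed.completeSpace_coe
  -- cover K by the closed sets F i
  set f : ℕ → Set K := fun i => if hi : i ∈ I then (Subtype.val ⁻¹' F i) else ∅ with hf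
  have hfc : ∀ i, IsClosed (f i) := by
    intro i
    rw [hf]
    by_cases hi : i ∈ I
    · simp only [hi, ↓reduceDIte]
      exact (hclosed i hi).preimage continuous_subtype_val
    · simp [hi]
  have hfU : ⋃ i, f i = univ := by
    ext x
    simp only [mem_iUnion, mem_univ, iff_true]
    have : (x : ℝ) ∈ Icc a b := hKsub x.2
    rw [← hcover, mem_iUnion₂] at this
    obtain ⟨i, hi, hxi⟩ := this
    exact ⟨i, by simp [hf, hi, hxi]⟩
  obtain ⟨i, x, hx⟩ := nonempty_interior_of_iUnion_of_closed hfc hfU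
  -- unpack: a ball in K around x contained in F i
  have hiI : i ∈ I := by
    by_contra hi
    simp [hf, hi] at hx
  have hfi : f i = Subtype.val ⁻¹' F i := by simp [hf, hiI]
  rw [hfi] at hx
  rw [mem_interior_iff_mem_nhds, Metric.mem_nhds_iff] at hx
  obtain ⟨ε, hε, hball⟩ := hx
  have hxi : (x : ℝ) ∈ F i := by
    have : x ∈ Metric.ball x ε := Metric.mem_ball_self hε
    exact hball this
  -- x ∈ K, so x is in the closure of Icc a b \ F i
  have hxcl : (x : ℝ) ∈ closure (Icc a b \ F i) := by
    have hxK : (x : ℝ) ∈ ⋃ j ∈ I, F j ∩ closure (Icc a b \ F j) := x.2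
    rw [mem_iUnion₂] at hxK
    obtain ⟨j, hj, hxj, hxclj⟩ := hxK
    have : j = i := by
      by_contra hne'
      exact (hdisj j hj i hiI hne').ne_of_mem hxj hxi rfl
    rwa [this] at hxclj
  -- find a point y ∈ Icc a b \ F i close to x
  rw [Metric.mem_closure_iff] at hxcl
  obtain ⟨y, ⟨hyIcc, hyi⟩, hyd⟩ := hxcl (ε / 2) (by linarith)
  -- apply the key lemma
  obtain ⟨s, hsK, hsd, hsni⟩ := sier_key' a b I F hclosed hdisj hcover hiI hxi hyIcc hyi
  -- s is in K, within ε of x, so in F i: contradiction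
  have hsd' : dist s (x : ℝ) < ε := by
    rw [Real.dist_eq]
    calc |s - (x:ℝ)| ≤ |y - (x:ℝ)| := hsd
    _ < ε := by rw [← Real.dist_eq]; rw [dist_comm] at hyd; linarith
  have : (⟨s, hsK⟩ : K) ∈ Metric.ball x ε := by
    rw [Metric.mem_ball]
    simpa [Subtype.dist_eq] using hsd'
  exact hsni (hball this)
end

section
/- Let [a,b] = ⋃_{i∈𝕀} F_i be a partition into pairwise disjoint nonempty closed sets with 𝕀 ⊆ ℕ of cardinality at least two. Let I ⊆ [a,b] be a nonempty closed interval and 𝕁 ⊆ 𝕀 a set of cardinality at least two such that I ∩ F_j ≠ ∅ for all j ∈ 𝕁 and I ∩ F_j = ∅ for all j ∈ 𝕀 \ 𝕁. Then there exist a closed interval I' ⊆ I and 𝕁' ⊆ 𝕁 of cardinality at least two such that min 𝕁 ∉ 𝕁', I' ∩ F_j ≠ ∅ for all j ∈ 𝕁', and I' ∩ F_j = ∅ for all j ∈ 𝕀 \ 𝕁'. -/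
/-!
Let `n = min 𝕁`, pick `k ∈ 𝕁` with `k ≠ n` and points `x ∈ I ∩ F k`, `y ∈ I ∩ F n`. Going from `x`
towards `y`, let `t` be the first point of `F n`. The half-open interval from `x` to `t` cannot lie
in `F k`: its closure would too, and `t ∉ F k`. So it contains a point `u ∉ F k`, and the interval
`I'` between `x` and `u` misses `F n` and meets both `F k` and the piece containing `u`. The indices
of the pieces meeting `I'` form `𝕁'`.
-/

open Set

section Order

variable {α : Type*} [ConditionallyCompleteLinearOrder α] [TopologicalSpace α] [OrderTopology α]
  [DenselyOrdered α] {A B : Set α} {x y : α}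

theorem exists_mem_Ico_notMem_disjoint_Icc (hA : IsClosed A) (hB : IsClosed B)
    (hAB : Disjoint A B) (hxy : x < y) (hx : x ∈ A) (hy : y ∈ B) :
    ∃ u ∈ Ico x y, u ∉ A ∧ Disjoint (Icc x u) B := by
  set t := sInf (B ∩ Icc x y)
  have ht : t ∈ B ∩ Icc x y :=
    (hB.inter isClosed_Icc).csInf_mem ⟨y, hy, hxy.le, le_rfl⟩ ⟨x, fun s hs => hs.2.1⟩
  have hxt : x < t := ht.2.1.lt_of_ne fun h => hAB.notMem_of_mem_left hx (h ▸ ht.1)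
  have hescape : ¬ Ico x t ⊆ A := fun h => by
    have hIcc : Icc x t ⊆ A := closure_Ico hxt.ne ▸ hA.closure_subset_iff.mpr h
    exact hAB.notMem_of_mem_left (hIcc (right_mem_Icc.mpr hxt.le)) ht.1
  obtain ⟨u, hu, huA⟩ := not_subset.mp hescape
  refine ⟨u, ⟨hu.1, hu.2.trans_le ht.2.2⟩, huA, disjoint_left.mpr fun s hs hsB => ?_⟩
  have hts : t ≤ s :=
    csInf_le ⟨x, fun r hr => hr.2.1⟩ ⟨hsB, hs.1, (hs.2.trans hu.2.le).trans ht.2.2⟩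
  exact (hts.trans hs.2).not_gt hu.2

open OrderDual in
theorem exists_Icc_subset_uIcc_not_subset_disjoint (hA : IsClosed A) (hB : IsClosed B)
    (hAB : Disjoint A B) (hx : x ∈ A) (hy : y ∈ B) :
    ∃ c d, Icc c d ⊆ uIcc x y ∧ (Icc c d ∩ A).Nonempty ∧ ¬ Icc c d ⊆ A ∧ Disjoint (Icc c d) B := by
  rcases (hAB.ne_of_mem hx hy).lt_or_gt with hxy | hyx
  · obtain ⟨u, hu, huA, hdisj⟩ := exists_mem_Ico_notMem_disjoint_Icc hA hB hAB hxy hx hy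
    exact ⟨x, u, (Icc_subset_Icc le_rfl hu.2.le).trans Icc_subset_uIcc,
      ⟨x, left_mem_Icc.mpr hu.1, hx⟩, fun h => huA (h (right_mem_Icc.mpr hu.1)), hdisj⟩
  · obtain ⟨u, hu, huA, hdisj⟩ := exists_mem_Ico_notMem_disjoint_Icc (α := αᵒᵈ)
      (A := ofDual ⁻¹' A) (B := ofDual ⁻¹' B) hA hB hAB
      (toDual_lt_toDual.mpr hyx) hx hy
    have hyu : y < ofDual u := hu.2
    have hux : ofDual u ≤ x := hu.1
    refine ⟨ofDual u, x, (Icc_subset_Icc hyu.le le_rfl).trans Icc_subset_uIcc',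
      ⟨x, right_mem_Icc.mpr hux, hx⟩, fun h => huA (h (left_mem_Icc.mpr hux)), ?_⟩
    exact disjoint_left.mpr fun s hs hsB =>
      disjoint_left.mp hdisj (show toDual s ∈ Icc (toDual x) u from ⟨hs.2, hs.1⟩) hsB

end Order

theorem nontrivial_setOf_inter_nonempty {α ι : Type*} {𝕀 : Set ι} {F : ι → Set α} {I : Set α}
    {k : ι} (hcover : I ⊆ ⋃ i ∈ 𝕀, F i) (hk : k ∈ 𝕀) (hmeet : (I ∩ F k).Nonempty)
    (hescape : ¬ I ⊆ F k) : {i ∈ 𝕀 | (I ∩ F i).Nonempty}.Nontrivial := by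
  obtain ⟨u, huI, huk⟩ := not_subset.mp hescape
  obtain ⟨m, hm, hum⟩ := mem_iUnion₂.mp (hcover huI)
  exact ⟨m, ⟨hm, u, huI, hum⟩, k, ⟨hk, hmeet⟩, fun h => huk (h ▸ hum)⟩

theorem sierpinski_inductive_step_general (a b : ℝ)
    (𝕀 : Set ℕ) (F : ℕ → Set ℝ)
    (hclosed : ∀ i ∈ 𝕀, IsClosed (F i))
    (hdisj : ∀ i ∈ 𝕀, ∀ j ∈ 𝕀, i ≠ j → Disjoint (F i) (F j))
    (hcover : ⋃ i ∈ 𝕀, F i = Set.Icc a b)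
    (c d : ℝ) (hsub : Set.Icc c d ⊆ Set.Icc a b)
    (𝕁 : Set ℕ) (h𝕁𝕀 : 𝕁 ⊆ 𝕀) (h𝕁 : 𝕁.Nontrivial)
    (hmeet : ∀ j ∈ 𝕁, (Set.Icc c d ∩ F j).Nonempty)
    (hmiss : ∀ j ∈ 𝕀 \ 𝕁, Set.Icc c d ∩ F j = ∅) :
    ∃ c' d', c ≤ c' ∧ c' ≤ d' ∧ d' ≤ d ∧
      ∃ 𝕁' ⊆ 𝕁, 𝕁'.Nontrivial ∧ sInf 𝕁 ∉ 𝕁' ∧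
        (∀ j ∈ 𝕁', (Set.Icc c' d' ∩ F j).Nonempty) ∧
        (∀ j ∈ 𝕀 \ 𝕁', Set.Icc c' d' ∩ F j = ∅) := by
  have hn : sInf 𝕁 ∈ 𝕁 := Nat.sInf_mem h𝕁.nonempty
  obtain ⟨k, hk, hkn⟩ := h𝕁.exists_ne (sInf 𝕁)
  obtain ⟨x, hxI, hx⟩ := hmeet k hk
  obtain ⟨y, hyI, hy⟩ := hmeet _ hn
  obtain ⟨c', d', hsub', hmeetk, hescape, hdisjn⟩ := exists_Icc_subset_uIcc_not_subset_disjoint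
    (hclosed k (h𝕁𝕀 hk)) (hclosed _ (h𝕁𝕀 hn)) (hdisj k (h𝕁𝕀 hk) _ (h𝕁𝕀 hn) hkn) hx hy
  have hI' : Icc c' d' ⊆ Icc c d := hsub'.trans (uIcc_subset_Icc hxI hyI)
  have hc'd' : c' ≤ d' := nonempty_Icc.mp (hmeetk.mono inter_subset_left)
  obtain ⟨hcc', hd'd⟩ := (Icc_subset_Icc_iff hc'd').mp hI'
  refine ⟨c', d', hcc', hc'd', hd'd, {j ∈ 𝕀 | (Icc c' d' ∩ F j).Nonempty}, ?_,
    nontrivial_setOf_inter_nonempty (hcover ▸ hI'.trans hsub) (h𝕁𝕀 hk) hmeetk hescape,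
    fun h => not_nonempty_iff_eq_empty.mpr hdisjn.inter_eq h.2, fun j hj => hj.2, ?_⟩
  · rintro j ⟨hj, s, hs, hsj⟩
    by_contra hj𝕁
    exact not_nonempty_iff_eq_empty.mpr (hmiss j ⟨hj, hj𝕁⟩) ⟨s, hI' hs, hsj⟩
  · rintro j ⟨hj, hj'⟩
    exact not_nonempty_iff_eq_empty.mp fun h => hj' ⟨hj, h⟩

/-- The inductive step in the proof of Sierpiński's theorem: given a partition of `[a,b]`
into pairwise disjoint nonempty closed sets `F_i`, `i ∈ 𝕀`, and a closed interval
`I = [c,d] ⊆ [a,b]` meeting exactly the `F_j` for `j` in a set `𝕁` of cardinality at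
least two, there are a closed subinterval `I' ⊆ I` and `𝕁' ⊆ 𝕁` of cardinality at least
two with `min 𝕁 ∉ 𝕁'` such that `I'` meets exactly the `F_j` with `j ∈ 𝕁'`. -/
theorem sierpinski_inductive_step (a b : ℝ) (hab : a < b)
    (𝕀 : Set ℕ) (h𝕀 : 𝕀.Nontrivial) (F : ℕ → Set ℝ)
    (hne : ∀ i ∈ 𝕀, (F i).Nonempty)
    (hclosed : ∀ i ∈ 𝕀, IsClosed (F i))
    (hdisj : ∀ i ∈ 𝕀, ∀ j ∈ 𝕀, i ≠ j → Disjoint (F i) (F j))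
    (hcover : ⋃ i ∈ 𝕀, F i = Set.Icc a b)
    (c d : ℝ) (hcd : c ≤ d) (hsub : Set.Icc c d ⊆ Set.Icc a b)
    (𝕁 : Set ℕ) (h𝕁𝕀 : 𝕁 ⊆ 𝕀) (h𝕁 : 𝕁.Nontrivial)
    (hmeet : ∀ j ∈ 𝕁, (Set.Icc c d ∩ F j).Nonempty)
    (hmiss : ∀ j ∈ 𝕀 \ 𝕁, Set.Icc c d ∩ F j = ∅) :
    ∃ c' d', c ≤ c' ∧ c' ≤ d' ∧ d' ≤ d ∧
      ∃ 𝕁' ⊆ 𝕁, 𝕁'.Nontrivial ∧ sInf 𝕁 ∉ 𝕁' ∧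
        (∀ j ∈ 𝕁', (Set.Icc c' d' ∩ F j).Nonempty) ∧
        (∀ j ∈ 𝕀 \ 𝕁', Set.Icc c' d' ∩ F j = ∅) :=
  sierpinski_inductive_step_general a b 𝕀 F hclosed hdisj hcover c d hsub 𝕁 h𝕁𝕀 h𝕁 hmeet hmiss
end

section
/- Let S ⊆ ℝ be a closed set such that no point of S is both left-isolated and right-isolated in S. Suppose x < y with x, y ∈ S, and suppose x is not right-isolated in S. Then there exist z ∈ (x, y) ∩ S that is not left-isolated in S, and z' ∈ (x, y) ∩ S that is not right-isolated in S. -/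
/-!
Where `S` contains a whole interval, its interior points are isolated from neither side.
Otherwise `(x, y)` contains a gap `t ∉ S`; since `x` is not right-isolated there are points
of `S` in `(x, t)`, and the largest of them is right-isolated, hence not left-isolated.
Mirroring this below that point produces a point that is not right-isolated.
-/

open Set

def IsLeftIsolated (S : Set ℝ) (x : ℝ) : Prop :=
  ∃ ε > 0, ∀ t ∈ Ioo (x - ε) x, t ∉ S

def IsRightIsolated (S : Set ℝ) (x : ℝ) : Prop :=
  ∃ ε > 0, ∀ t ∈ Ioo x (x + ε), t ∉ S

section

variable {S : Set ℝ} {a b m : ℝ}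

lemma not_isLeftIsolated_of_Ioo_subset (hsub : Ioo a b ⊆ S) (hm : m ∈ Ioo a b) :
    ¬IsLeftIsolated S m := by
  rintro ⟨ε, hε, h⟩
  obtain ⟨u, hu, hum⟩ := exists_between (max_lt (by linarith) hm.1 : max (m - ε) a < m)
  rw [max_lt_iff] at hu
  exact h u ⟨hu.1, hum⟩ (hsub ⟨hu.2, hum.trans hm.2⟩)

lemma not_isRightIsolated_of_Ioo_subset (hsub : Ioo a b ⊆ S) (hm : m ∈ Ioo a b) :
    ¬IsRightIsolated S m := by
  rintro ⟨ε, hε, h⟩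
  obtain ⟨u, hmu, hu⟩ := exists_between (lt_min (by linarith) hm.2 : m < min (m + ε) b)
  rw [lt_min_iff] at hu
  exact h u ⟨hmu, hu.1⟩ (hsub ⟨hm.1.trans hmu, hu.2⟩)

variable (hS : IsClosed S) (hno : ∀ x ∈ S, ¬(IsLeftIsolated S x ∧ IsRightIsolated S x))
include hS hno

lemma exists_not_isLeftIsolated_of_notMem {s t : ℝ} (hs : s ∈ S) (hst : s < t) (ht : t ∉ S) :
    ∃ z ∈ S, s ≤ z ∧ z < t ∧ ¬IsLeftIsolated S z := by
  obtain ⟨z, ⟨hzS, -, hzt⟩, hmax⟩ :=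
    (isCompact_Icc.inter_left hS).exists_isGreatest ⟨s, hs, le_rfl, hst.le⟩
  have hzt : z < t := hzt.lt_of_ne fun h => ht (h ▸ hzS)
  have hsz : s ≤ z := hmax ⟨hs, le_rfl, hst.le⟩
  have hright : IsRightIsolated S z := by
    refine ⟨t - z, sub_pos.2 hzt, fun u hu huS => ?_⟩
    rw [add_sub_cancel] at hu
    exact (hmax ⟨huS, hsz.trans hu.1.le, hu.2.le⟩).not_gt hu.1
  exact ⟨z, hzS, hsz, hzt, fun hleft => hno z hzS ⟨hleft, hright⟩⟩

lemma exists_not_isRightIsolated_of_notMem {s t : ℝ} (hs : s ∈ S) (hts : t < s) (ht : t ∉ S) :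
    ∃ w ∈ S, t < w ∧ w ≤ s ∧ ¬IsRightIsolated S w := by
  obtain ⟨w, ⟨hwS, htw, -⟩, hmin⟩ :=
    (isCompact_Icc.inter_left hS).exists_isLeast ⟨s, hs, hts.le, le_rfl⟩
  have htw : t < w := htw.lt_of_ne fun h => ht (h ▸ hwS)
  have hws : w ≤ s := hmin ⟨hs, hts.le, le_rfl⟩
  have hleft : IsLeftIsolated S w := by
    refine ⟨w - t, sub_pos.2 htw, fun u hu huS => ?_⟩
    rw [sub_sub_cancel] at hu
    exact (hmin ⟨huS, hu.1.le, hu.2.le.trans hws⟩).not_gt hu.2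
  exact ⟨w, hwS, htw, hws, fun hright => hno w hwS ⟨hleft, hright⟩⟩

lemma exists_mem_Ioo_not_isLeftIsolated {x y : ℝ} (hxy : x < y) (hx : ¬IsRightIsolated S x) :
    ∃ z ∈ Ioo x y, z ∈ S ∧ ¬IsLeftIsolated S z := by
  by_cases hsub : Ioo x y ⊆ S
  · have hmid : (x + y) / 2 ∈ Ioo x y := ⟨by linarith, by linarith⟩
    exact ⟨_, hmid, hsub hmid, not_isLeftIsolated_of_Ioo_subset hsub hmid⟩
  obtain ⟨t, ⟨hxt, hty⟩, ht⟩ := not_subset.1 hsub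
  obtain ⟨s, hs, hsS⟩ : ∃ s ∈ Ioo x t, s ∈ S := by
    by_contra! h
    exact hx ⟨t - x, sub_pos.2 hxt, by rwa [add_sub_cancel]⟩
  obtain ⟨z, hzS, hsz, hzt, hz⟩ := exists_not_isLeftIsolated_of_notMem hS hno hsS hs.2 ht
  exact ⟨z, ⟨hs.1.trans_le hsz, hzt.trans hty⟩, hzS, hz⟩

lemma exists_mem_Ioo_not_isRightIsolated {x y : ℝ} (hxy : x < y) (hy : ¬IsLeftIsolated S y) :
    ∃ w ∈ Ioo x y, w ∈ S ∧ ¬IsRightIsolated S w := by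
  by_cases hsub : Ioo x y ⊆ S
  · have hmid : (x + y) / 2 ∈ Ioo x y := ⟨by linarith, by linarith⟩
    exact ⟨_, hmid, hsub hmid, not_isRightIsolated_of_Ioo_subset hsub hmid⟩
  obtain ⟨t, ⟨hxt, hty⟩, ht⟩ := not_subset.1 hsub
  obtain ⟨s, hs, hsS⟩ : ∃ s ∈ Ioo t y, s ∈ S := by
    by_contra! h
    exact hy ⟨y - t, sub_pos.2 hty, by rwa [sub_sub_cancel]⟩
  obtain ⟨w, hwS, htw, hws, hw⟩ := exists_not_isRightIsolated_of_notMem hS hno hsS hs.1 ht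
  exact ⟨w, ⟨hxt.trans htw, hws.trans_lt hs.2⟩, hwS, hw⟩

end

theorem exists_nonisolated_between_general (S : Set ℝ) (hS : IsClosed S)
    (hno : ∀ x ∈ S,
      ¬((∃ ε > 0, ∀ t ∈ Set.Ioo (x - ε) x, t ∉ S) ∧ (∃ ε > 0, ∀ t ∈ Set.Ioo x (x + ε), t ∉ S)))
    (x y : ℝ) (hxy : x < y)
    (hxr : ¬∃ ε > 0, ∀ t ∈ Set.Ioo x (x + ε), t ∉ S) :
    (∃ z ∈ Set.Ioo x y, z ∈ S ∧ ¬∃ ε > 0, ∀ t ∈ Set.Ioo (z - ε) z, t ∉ S) ∧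
    (∃ z ∈ Set.Ioo x y, z ∈ S ∧ ¬∃ ε > 0, ∀ t ∈ Set.Ioo z (z + ε), t ∉ S) := by
  obtain ⟨z, ⟨hxz, hzy⟩, hzS, hz⟩ := exists_mem_Ioo_not_isLeftIsolated hS hno hxy hxr
  obtain ⟨w, ⟨hxw, hwz⟩, hwS, hw⟩ := exists_mem_Ioo_not_isRightIsolated hS hno hxz hz
  exact ⟨⟨z, ⟨hxz, hzy⟩, hzS, hz⟩, ⟨w, ⟨hxw, hwz.trans hzy⟩, hwS, hw⟩⟩

/-- If `S ⊆ ℝ` is closed and no point of `S` is isolated from both sides, then between any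
two points `x < y` of `S` with `x` not right-isolated, there are points of `S` in `(x,y)`
that are not left-isolated, and points that are not right-isolated. -/
theorem exists_nonisolated_between (S : Set ℝ) (hS : IsClosed S)
    (hno : ∀ x ∈ S,
      ¬((∃ ε > 0, ∀ t ∈ Set.Ioo (x - ε) x, t ∉ S) ∧ (∃ ε > 0, ∀ t ∈ Set.Ioo x (x + ε), t ∉ S)))
    (x y : ℝ) (hx : x ∈ S) (hy : y ∈ S) (hxy : x < y)
    (hxr : ¬∃ ε > 0, ∀ t ∈ Set.Ioo x (x + ε), t ∉ S) :
    (∃ z ∈ Set.Ioo x y, z ∈ S ∧ ¬∃ ε > 0, ∀ t ∈ Set.Ioo (z - ε) z, t ∉ S) ∧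
    (∃ z ∈ Set.Ioo x y, z ∈ S ∧ ¬∃ ε > 0, ∀ t ∈ Set.Ioo z (z + ε), t ∉ S) :=
  exists_nonisolated_between_general S hS hno x y hxy hxr
end
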